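/- Let q ≥ 1 be an integer. Let V be the free ℤ-module with orthogonal basis H, E, E_1, …, E_{4q} and symmetric bilinear form Q with Q(H,H) = 1, Q(E,E) = −1, Q(E_i,E_i) = −1. Suppose Λ ∈ V satisfies: Q(Λ, H−E) = 2; Q(Λ, E_{2i} − E_{2i−1}) = 0 for all i = 1, …, 2q; Q(Λ, H − E − E_{2i−1} − E_{2i}) = 0 for all i = 1, …, 2q; and Q(Λ,Λ) = 0. Then Λ = (q+1)H − (q−1)E − (E_1 + ⋯ + E_{4q}). -/

import Mathlib

/-!
The classes `E_{2i} - E_{2i-1}` and `H - E - E_{2i-1} - E_{2i}` together force the two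
coefficients of `Λ` on `E_{2i-1}, E_{2i}` to be equal with sum `-(Λ_H + Λ_E) = -2`, so every
`E_j` enters `Λ` with coefficient `-1`. Then `Λ² = Λ_H² - Λ_E² - 4q = 2(Λ_H - Λ_E) - 4q`
vanishes, which together with `Λ_H + Λ_E = 2` determines `Λ_H = q + 1` and `Λ_E = 1 - q`.
-/

def lorentzForm {R : Type*} [CommRing R] {n : ℕ} (v w : Fin (n + 1) → R) : R :=
  v 0 * w 0 - ∑ i : Fin n, v i.succ * w i.succ

section LorentzForm

variable {R : Type*} [CommRing R] {n : ℕ}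

theorem eq_lorentzForm {Q : (Fin (n + 1) → R) → (Fin (n + 1) → R) → R}
    (hQ : ∀ v w, Q v w =
      v 0 * w 0 - ∑ i : Fin (n + 1), if 1 ≤ (i : ℕ) then v i * w i else 0) :
    Q = lorentzForm := by
  ext v w
  simp [hQ, lorentzForm, Fin.sum_univ_succ]

theorem lorentzForm_sub_right (v w w' : Fin (n + 1) → R) :
    lorentzForm v (w - w') = lorentzForm v w - lorentzForm v w' := by
  simp only [lorentzForm, Pi.sub_apply, mul_sub, Finset.sum_sub_distrib]
  ring

theorem lorentzForm_single_zero_right (v : Fin (n + 1) → R) :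
    lorentzForm v (Pi.single 0 1) = v 0 := by
  simp [lorentzForm, Fin.succ_ne_zero]

theorem lorentzForm_single_right (v : Fin (n + 1) → R) {k : Fin (n + 1)} (hk : k ≠ 0) :
    lorentzForm v (Pi.single k 1) = -v k := by
  obtain ⟨k, rfl⟩ := Fin.exists_succ_eq.mpr hk
  simp [lorentzForm, Pi.single_apply, Fin.succ_ne_zero]

theorem lorentzForm_self_of_tail_eq (v : Fin (n + 2) → R) {c : R}
    (hv : ∀ i : Fin n, v i.succ.succ = c) :
    lorentzForm v v = v 0 ^ 2 - v 1 ^ 2 - n * c ^ 2 := by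
  simp [lorentzForm, Fin.sum_univ_succ, hv]
  ring

-- Coordinates: index `0` is `H`, index `1` is `E`, index `j + 1` is `E_j`.
theorem lorentzForm_H_sub_E (v : Fin (n + 2) → R) :
    lorentzForm v (fun j => if (j : ℕ) = 0 then 1 else if (j : ℕ) = 1 then -1 else 0) =
      v 0 + v 1 := by
  have hw : (fun j : Fin (n + 2) => if (j : ℕ) = 0 then (1 : R) else if (j : ℕ) = 1 then -1
      else 0) = Pi.single 0 1 - Pi.single 1 1 := by
    ext j
    simp only [Pi.sub_apply, Pi.single_apply, Fin.ext_iff, Fin.val_zero, Fin.val_one]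
    split_ifs <;> first | omega | simp
  rw [hw, lorentzForm_sub_right, lorentzForm_single_zero_right,
    lorentzForm_single_right _ Fin.zero_lt_one.ne', sub_neg_eq_add]

theorem lorentzForm_E_succ_sub_E (v : Fin (n + 2) → R) {a : ℕ} (ha : 1 ≤ a)
    (ha' : a + 1 < n + 2) :
    lorentzForm v (fun j => if (j : ℕ) = a + 1 then 1 else if (j : ℕ) = a then -1 else 0) =
      v ⟨a, by omega⟩ - v ⟨a + 1, ha'⟩ := by
  have hw : (fun j : Fin (n + 2) => if (j : ℕ) = a + 1 then (1 : R) else if (j : ℕ) = a then -1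
      else 0) = Pi.single ⟨a + 1, ha'⟩ 1 - Pi.single ⟨a, by omega⟩ 1 := by
    ext j
    simp only [Pi.sub_apply, Pi.single_apply, Fin.ext_iff]
    split_ifs <;> first | omega | simp
  rw [hw, lorentzForm_sub_right, lorentzForm_single_right _ (by simp [Fin.ext_iff]),
    lorentzForm_single_right _ (by simp [Fin.ext_iff]; omega)]
  ring

theorem lorentzForm_H_sub_E_sub_E_sub_E_succ (v : Fin (n + 2) → R) {a : ℕ} (ha : 2 ≤ a)
    (ha' : a + 1 < n + 2) :
    lorentzForm v (fun j => if (j : ℕ) = 0 then 1 else if (j : ℕ) = 1 then -1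
      else if (j : ℕ) = a ∨ (j : ℕ) = a + 1 then -1 else 0) =
      v 0 + v 1 + v ⟨a, by omega⟩ + v ⟨a + 1, ha'⟩ := by
  have hw : (fun j : Fin (n + 2) => if (j : ℕ) = 0 then (1 : R) else if (j : ℕ) = 1 then -1
      else if (j : ℕ) = a ∨ (j : ℕ) = a + 1 then -1 else 0) =
      Pi.single 0 1 - Pi.single 1 1 - Pi.single ⟨a, by omega⟩ 1 -
        Pi.single ⟨a + 1, ha'⟩ 1 := by
    ext j
    simp only [Pi.sub_apply, Pi.single_apply, Fin.ext_iff, Fin.val_zero, Fin.val_one]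
    split_ifs <;> first | omega | simp
  rw [hw, lorentzForm_sub_right, lorentzForm_sub_right, lorentzForm_sub_right,
    lorentzForm_single_zero_right, lorentzForm_single_right _ Fin.zero_lt_one.ne',
    lorentzForm_single_right _ (by simp [Fin.ext_iff]; omega),
    lorentzForm_single_right _ (by simp [Fin.ext_iff])]
  ring

end LorentzForm

/-- In the second homology lattice of `R(q+1)` (basis `H, E, E₁, …, E_{4q}` indexed
`0, 1, 2, …, 4q+1`, with form `Q(v,w) = v₀w₀ - Σ_{i≥1} vᵢwᵢ`), any class `Λ` meeting
`H - E` twice, orthogonal to the (-2)-sphere classes `E_{2i} - E_{2i-1}` and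
`H - E - E_{2i-1} - E_{2i}` for `i = 1, …, 2q`, and of square zero must be
`(q+1)H - (q-1)E - (E₁ + ⋯ + E_{4q})`. -/
theorem stmt_14 (q : ℕ)
    (Q : (Fin (4 * q + 2) → ℤ) → (Fin (4 * q + 2) → ℤ) → ℤ)
    (hQ : ∀ v w, Q v w = v ⟨0, by omega⟩ * w ⟨0, by omega⟩
      - ∑ i : Fin (4 * q + 2), if 1 ≤ (i : ℕ) then v i * w i else 0)
    (Λ : Fin (4 * q + 2) → ℤ)
    (h1 : Q Λ (fun i => if (i : ℕ) = 0 then 1 else if (i : ℕ) = 1 then -1 else 0) = 2)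
    (h2 : ∀ i, 1 ≤ i → i ≤ 2 * q →
      Q Λ (fun j => if (j : ℕ) = 2 * i + 1 then 1
        else if (j : ℕ) = 2 * i then -1 else 0) = 0)
    (h3 : ∀ i, 1 ≤ i → i ≤ 2 * q →
      Q Λ (fun j => if (j : ℕ) = 0 then 1 else if (j : ℕ) = 1 then -1
        else if (j : ℕ) = 2 * i ∨ (j : ℕ) = 2 * i + 1 then -1 else 0) = 0)
    (h4 : Q Λ Λ = 0) :
    Λ = fun j : Fin (4 * q + 2) => if (j : ℕ) = 0 then (q : ℤ) + 1
      else if (j : ℕ) = 1 then -((q : ℤ) - 1) else -1 := by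
  obtain rfl : Q = lorentzForm := eq_lorentzForm hQ
  rw [lorentzForm_H_sub_E] at h1
  have hpair : ∀ i (hi : 1 ≤ i) (hi' : i ≤ 2 * q),
      Λ ⟨2 * i, by omega⟩ = -1 ∧ Λ ⟨2 * i + 1, by omega⟩ = -1 := by
    intro i hi hi'
    have hE := h2 i hi hi'
    have hHE := h3 i hi hi'
    rw [lorentzForm_E_succ_sub_E _ (by omega) (by omega)] at hE
    rw [lorentzForm_H_sub_E_sub_E_sub_E_succ _ (by omega) (by omega)] at hHE
    constructor <;> linarith
  have htail : ∀ i : Fin (4 * q), Λ i.succ.succ = -1 := by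
    intro i
    obtain ⟨k, hk | hk⟩ := Nat.even_or_odd' (i + 2)
    · convert (hpair k (by omega) (by omega)).1 using 2
      exact Fin.ext hk
    · convert (hpair k (by omega) (by omega)).2 using 2
      exact Fin.ext hk
  rw [lorentzForm_self_of_tail_eq Λ htail] at h4
  have hdiff : Λ 0 - Λ 1 = 2 * q := by
    have : (Λ 0 - Λ 1) * (Λ 0 + Λ 1) = 4 * q := by push_cast at h4; linear_combination h4
    rw [h1] at this
    linarith
  ext j
  split_ifs with j0 j1
  · rw [show j = 0 from Fin.ext j0]; linarith
  · rw [show j = 1 from Fin.ext j1]; linarith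
  · obtain ⟨i, rfl⟩ : ∃ i : Fin (4 * q), j = i.succ.succ :=
      ⟨⟨j - 2, by omega⟩, by ext; simp; omega⟩
    exact htail i
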